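/- If Σ_{i=1}^{∞} p_i = +∞, then every summable sequence μ = (μ_i)_{i≥0} ∈ ℓ¹(ℕ) satisfying μS = μ (i.e. μ_j = Σ_{i≥0} μ_i S_{i,j} for all j ≥ 0) is identically zero; in particular the Markov chain with transition matrix S admits no invariant probability measure, so if in addition Π_{i=1}^{∞} p_i = 0 the chain is null recurrent. -/

import Mathlib

/-- Fibonacci sequence with `F 0 = 1`, `F 1 = 2`, `F (n+2) = F (n+1) + F n`. -/
def fibF : ℕ → ℕ
  | 0 => 1
  | 1 => 2
  | (n+2) => fibF (n+1) + fibF n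

lemma fibF_pos : ∀ n, 0 < fibF n
  | 0 => by simp [fibF]
  | 1 => by simp [fibF]
  | (n+2) => by
      have h1 := fibF_pos (n+1)
      simp only [fibF]
      omega

/-- Zeckendorf digits of `N` in the base `fibF`: `N = ∑ i, zeck N i * fibF i`,
with `zeck N i ∈ {0,1}` and no two consecutive `1`'s. -/
def zeck (N i : ℕ) : ℕ :=
  if h : N = 0 then 0
  else if i = Nat.findGreatest (fun j => fibF j ≤ N) N then 1
  else zeck (N - fibF (Nat.findGreatest (fun j => fibF j ≤ N) N)) i
termination_by N
decreasing_by
  exact Nat.sub_lt (Nat.pos_of_ne_zero h) (fibF_pos _)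

lemma zeck_eq_zero_of_lt : ∀ N, ∀ i, N < i → zeck N i = 0 := by
  intro N
  induction N using Nat.strong_induction_on with
  | _ N ih =>
    intro i hi
    rw [zeck]
    split
    · rfl
    · rename_i h
      have hkN : Nat.findGreatest (fun j => fibF j ≤ N) N ≤ N := Nat.findGreatest_le N
      rw [if_neg (by omega)]
      exact ih _ (Nat.sub_lt (Nat.pos_of_ne_zero h) (fibF_pos _)) i
        (lt_of_le_of_lt (Nat.sub_le _ _) hi)

lemma exists_break0 (N : ℕ) : ∃ i, ¬(zeck N (2*i+1) = 1 ∧ zeck N (2*i) = 0) := by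
  refine ⟨N + 1, ?_⟩
  have h : zeck N (2*(N+1)+1) = 0 := zeck_eq_zero_of_lt N _ (by omega)
  simp [h]

lemma exists_break1 (N : ℕ) : ∃ i, ¬(zeck N (2*i+2) = 1 ∧ zeck N (2*i+1) = 0) := by
  refine ⟨N + 1, ?_⟩
  have h : zeck N (2*(N+1)+2) = 0 := zeck_eq_zero_of_lt N _ (by omega)
  simp [h]

/-- The number `s` of `10`-blocks carried in the stochastic Fibonacci adding machine:
if the digits of `N` end with `00(10)^s` (case `ε₀ = 0`) or with `00(10)^s1`
(case `ε₀ = 1`), this returns `s`. -/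
def carryLen (N : ℕ) : ℕ :=
  if zeck N 0 = 0 then Nat.find (exists_break0 N) else Nat.find (exists_break1 N)

/-- `Pprod p t = p 1 * p 2 * ⋯ * p t`. -/
def Pprod (p : ℕ → ℝ) (t : ℕ) : ℝ := ∏ i ∈ Finset.Icc 1 t, p i

/-- The transition matrix `S` of the Fibonacci stochastic adding machine associated to
the probability sequence `p`:  `S N N = 1 - p 1`;  if the digits of `N` end with
`00(10)^s` then `S N (N+1) = p 1 ⋯ p (s+1)` and `S N (N+1-F (2m)) = p 1 ⋯ p m * (1 - p (m+1))`
for `1 ≤ m ≤ s`;  if the digits of `N` end with `00(10)^s1` then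
`S N (N+1) = p 1 ⋯ p (s+2)` and `S N (N+1-F (2m-1)) = p 1 ⋯ p m * (1 - p (m+1))` for
`1 ≤ m ≤ s+1`;  all other entries vanish. -/
noncomputable def Smat (p : ℕ → ℝ) (N M : ℕ) : ℝ :=
  (if M = N then 1 - p 1 else 0) +
  if zeck N 0 = 0 then
    (if M = N + 1 then Pprod p (carryLen N + 1) else 0) +
    ∑ m ∈ Finset.Icc 1 (carryLen N),
      (if M = N + 1 - fibF (2*m) then Pprod p m * (1 - p (m+1)) else 0)
  else
    (if M = N + 1 then Pprod p (carryLen N + 2) else 0) +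
    ∑ m ∈ Finset.Icc 1 (carryLen N + 1),
      (if M = N + 1 - fibF (2*m - 1) then Pprod p m * (1 - p (m+1)) else 0)


/-!
Let `zeckSet N` be the set of Zeckendorf digit positions of `N`, and weight `N` by
`zeckWeight p N = ∏ k ∈ zeckSet N, digitWeight p k`, where `digitWeight p 0 = 1` and
`digitWeight p k = p ((k + 1) / 2 + 1)`. If the lowest digit of `N` is `z`, the only states
feeding `N` are `N`, `N - 1` and `N + (fibF r - 1)` for `1 ≤ r < z`: adding
`fibF r - 1 = fibF (r - 1) + fibF (r - 3) + ⋯` below the digits of `N` creates exactly the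
trailing block that carries back to `N`. The weight `zeckWeight p` satisfies the invariance
equation in each such column (a telescoping sum). Writing an invariant `μ = zeckWeight p * ν`,
induction on the lowest digit gives `ν N = ν (N - 1)`, so `μ = μ 0 * zeckWeight p`. As
`zeckWeight p (fibF (2 * s + 1)) = p (s + 2)`, summability of `μ` and divergence of `∑ p i`
force `μ 0 = 0`.
-/

lemma fibF_eq_fib : ∀ n, fibF n = Nat.fib (n + 2)
  | 0 => rfl
  | 1 => rfl
  | n + 2 => by
    rw [fibF, fibF_eq_fib n, fibF_eq_fib (n + 1), Nat.fib_add_two (n := n + 2)]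
    ac_rfl

lemma fibF_strictMono : StrictMono fibF := by
  simpa only [← fibF_eq_fib] using Nat.fib_add_two_strictMono

lemma lt_fibF : ∀ n, n < fibF n
  | 0 => fibF_pos 0
  | n + 1 => Nat.lt_of_le_of_lt (lt_fibF n) (fibF_strictMono n.lt_succ_self)

lemma two_le_fibF {r : ℕ} (hr : 1 ≤ r) : 2 ≤ fibF r := by
  have := lt_fibF r
  omega

def fibSum (A : Finset ℕ) : ℕ := ∑ k ∈ A, fibF k

def NoConsec (A : Finset ℕ) : Prop := ∀ k ∈ A, k + 1 ∉ A

lemma NoConsec.mono {A B : Finset ℕ} (hB : NoConsec B) (hAB : A ⊆ B) : NoConsec A :=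
  fun k hk hk1 => hB k (hAB hk) (hAB hk1)

lemma fibF_le_fibSum {A : Finset ℕ} {k : ℕ} (h : k ∈ A) : fibF k ≤ fibSum A :=
  Finset.single_le_sum (fun _ _ => Nat.zero_le _) h

lemma fibSum_insert {A : Finset ℕ} {a : ℕ} (h : a ∉ A) :
    fibSum (insert a A) = fibF a + fibSum A :=
  Finset.sum_insert h

lemma fibSum_lt_fibF_succ {A : Finset ℕ} (hA : NoConsec A) :
    ∀ K, (∀ k ∈ A, k ≤ K) → fibSum A < fibF (K + 1) := by
  induction A using Finset.induction_on_max with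
  | empty => exact fun K _ => fibF_pos _
  | insert a s hlt ih =>
    intro K hK
    have has : a ∉ s := fun h => (hlt a h).false
    have hsa : ∀ x ∈ s, x + 2 ≤ a := fun x hx => by
      have := hlt x hx
      have : x + 1 ≠ a := fun h =>
        hA x (Finset.mem_insert_of_mem hx) (h ▸ Finset.mem_insert_self a s)
      omega
    have haK : fibF (a + 1) ≤ fibF (K + 1) :=
      fibF_strictMono.monotone (Nat.succ_le_succ (hK a (Finset.mem_insert_self a s)))
    rw [fibSum_insert has]
    rcases s.eq_empty_or_nonempty with rfl | ⟨x, hx⟩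
    · simpa [fibSum] using (fibF_strictMono a.lt_succ_self).trans_le haK
    · obtain ⟨b, rfl⟩ : ∃ b, a = b + 2 := ⟨a - 2, by have := hsa x hx; omega⟩
      have := ih (hA.mono (Finset.subset_insert _ _)) b (fun x hx => by have := hsa x hx; omega)
      have : fibF (b + 2 + 1) = fibF (b + 2) + fibF (b + 1) := rfl
      omega

lemma eq_of_fibSum_eq {A : Finset ℕ} (hA : NoConsec A) :
    ∀ {B : Finset ℕ}, NoConsec B → fibSum A = fibSum B → A = B := by
  induction A using Finset.induction_on_max with
  | empty =>
    intro B _ hs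
    refine (Finset.eq_empty_of_forall_notMem fun k hk => ?_).symm
    have := fibF_le_fibSum hk
    have := fibF_pos k
    rw [show fibSum ∅ = 0 from Finset.sum_empty] at hs
    omega
  | insert a s hlt ih =>
    intro B hB hs
    have has : a ∉ s := fun h => (hlt a h).false
    have haA := Finset.mem_insert_self a s
    have hBne : B.Nonempty := Finset.nonempty_iff_ne_empty.2 fun hB0 => by
      have := fibF_le_fibSum haA
      have := fibF_pos a
      rw [hB0, show fibSum ∅ = 0 from Finset.sum_empty] at hs
      omega
    set b := B.max' hBne
    have hbB : b ∈ B := B.max'_mem hBne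
    have hab : a = b := by
      have h1 := fibSum_lt_fibF_succ hA a fun k hk => by
        rcases Finset.mem_insert.1 hk with rfl | hk
        · rfl
        · exact (hlt k hk).le
      have h2 := fibSum_lt_fibF_succ hB b fun k hk => B.le_max' k hk
      have h3 := fibF_le_fibSum haA
      have h4 := fibF_le_fibSum hbB
      have h5 := fibF_strictMono.lt_iff_lt.1 (show fibF a < fibF (b + 1) by omega)
      have h6 := fibF_strictMono.lt_iff_lt.1 (show fibF b < fibF (a + 1) by omega)
      omega
    rw [← hab] at hbB
    have hrest : s = B.erase a := by
      refine ih (hA.mono (Finset.subset_insert _ _)) (hB.mono (B.erase_subset a)) ?_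
      have := fibSum_insert (Finset.notMem_erase a B)
      rw [Finset.insert_erase hbB, ← hs, fibSum_insert has] at this
      omega
    rw [hrest, Finset.insert_erase hbB]

lemma zeck_of_ne_zero {N : ℕ} (hN : N ≠ 0) : ∃ K, fibF K ≤ N ∧ N < fibF (K + 1) ∧
    ∀ i, zeck N i = if i = K then 1 else zeck (N - fibF K) i := by
  set K := Nat.findGreatest (fun j => fibF j ≤ N) N
  refine ⟨K, ?_, ?_, fun i => by rw [zeck, dif_neg hN]⟩
  · exact Nat.findGreatest_spec (P := fun j => fibF j ≤ N) (Nat.zero_le N)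
      (by simp [fibF]; omega)
  · by_contra! h
    exact Nat.findGreatest_is_greatest K.lt_succ_self ((lt_fibF _).le.trans h) h

lemma zeck_le_one (N : ℕ) : ∀ i, zeck N i ≤ 1 := by
  induction N using Nat.strong_induction_on with
  | _ N ih =>
    rcases eq_or_ne N 0 with rfl | hN
    · simp [zeck]
    · obtain ⟨K, -, -, hzeck⟩ := zeck_of_ne_zero hN
      intro i
      rw [hzeck]
      split
      · rfl
      · exact ih _ (Nat.sub_lt (Nat.pos_of_ne_zero hN) (fibF_pos K)) i

def zeckSet (N : ℕ) : Finset ℕ := (Finset.range (N + 1)).filter (fun i => zeck N i = 1)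

lemma zeckSet_zero : zeckSet 0 = ∅ := by
  simp [zeckSet, zeck]

lemma mem_zeckSet {N i : ℕ} : i ∈ zeckSet N ↔ zeck N i = 1 := by
  rw [zeckSet, Finset.mem_filter, Finset.mem_range, and_iff_right_iff_imp]
  intro h
  by_contra! hi
  rw [zeck_eq_zero_of_lt N i (by omega)] at h
  exact zero_ne_one h

lemma zeck_eq_zero_iff {N i : ℕ} : zeck N i = 0 ↔ i ∉ zeckSet N := by
  have := zeck_le_one N i
  rw [mem_zeckSet]
  omega

lemma zeckSet_of_ne_zero {N : ℕ} (hN : N ≠ 0) : ∃ K, fibF K ≤ N ∧ N < fibF (K + 1) ∧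
    zeckSet N = insert K (zeckSet (N - fibF K)) := by
  obtain ⟨K, hKN, hNK, hzeck⟩ := zeck_of_ne_zero hN
  refine ⟨K, hKN, hNK, Finset.ext fun i => ?_⟩
  rw [Finset.mem_insert, mem_zeckSet, mem_zeckSet, hzeck]
  split <;> simp_all

lemma add_two_le_of_fibF_le_sub {N K k : ℕ} (hNK : N < fibF (K + 1))
    (hk : fibF k ≤ N - fibF K) :
    k + 2 ≤ K := by
  have := fibF_pos k
  cases K with
  | zero => simp only [fibF] at hNK hk; omega
  | succ K =>
    have : fibF (K + 1 + 1) = fibF (K + 1) + fibF K := rfl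
    have := fibF_strictMono.lt_iff_lt.1 (show fibF k < fibF K by omega)
    omega

lemma noConsec_zeckSet_and_fibSum (N : ℕ) : NoConsec (zeckSet N) ∧ fibSum (zeckSet N) = N := by
  induction N using Nat.strong_induction_on with
  | _ N ih =>
    rcases eq_or_ne N 0 with rfl | hN
    · simp [zeckSet_zero, NoConsec, fibSum]
    · obtain ⟨K, hKN, hNK, hset⟩ := zeckSet_of_ne_zero hN
      obtain ⟨hR, hsR⟩ := ih (N - fibF K) (Nat.sub_lt (Nat.pos_of_ne_zero hN) (fibF_pos K))
      have hlow : ∀ k ∈ zeckSet (N - fibF K), k + 2 ≤ K :=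
        fun k hk => add_two_le_of_fibF_le_sub hNK (hsR ▸ fibF_le_fibSum hk)
      have hKR : K ∉ zeckSet (N - fibF K) := fun h => by have := hlow K h; omega
      rw [hset, fibSum_insert hKR, hsR]
      refine ⟨fun k hk hk1 => ?_, by omega⟩
      rcases Finset.mem_insert.1 hk with rfl | hk <;> rcases Finset.mem_insert.1 hk1 with h | h
      · omega
      · have := hlow _ h; omega
      · have := hlow k hk; omega
      · exact hR k hk h

lemma noConsec_zeckSet (N : ℕ) : NoConsec (zeckSet N) := (noConsec_zeckSet_and_fibSum N).1

lemma fibSum_zeckSet (N : ℕ) : fibSum (zeckSet N) = N := (noConsec_zeckSet_and_fibSum N).2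

lemma zeckSet_eq {N : ℕ} {A : Finset ℕ} (hA : NoConsec A) (hs : fibSum A = N) : zeckSet N = A :=
  eq_of_fibSum_eq (noConsec_zeckSet N) hA (by rw [fibSum_zeckSet, hs])

lemma zeckSet_fibF (k : ℕ) : zeckSet (fibF k) = {k} :=
  zeckSet_eq (fun j hj hj1 => by simp at hj hj1; omega) (Finset.sum_singleton _ _)

lemma ne_zero_of_mem_zeckSet {N z : ℕ} (hz : z ∈ zeckSet N) : N ≠ 0 := by
  rintro rfl
  simp [zeckSet_zero] at hz

lemma zeckSet_nonempty {N : ℕ} (hN : N ≠ 0) : (zeckSet N).Nonempty :=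
  Finset.nonempty_iff_ne_empty.2 fun h => hN (by rw [← fibSum_zeckSet N, h]; rfl)

lemma fibF_le_of_mem_zeckSet {N k : ℕ} (hk : k ∈ zeckSet N) : fibF k ≤ N :=
  fibSum_zeckSet N ▸ fibF_le_fibSum hk

lemma lt_of_mem_zeckSet {N k r : ℕ} (hk : k ∈ zeckSet N) (hN : N < fibF r) : k < r :=
  fibF_strictMono.lt_iff_lt.1 ((fibF_le_of_mem_zeckSet hk).trans_lt hN)

lemma zeckSet_add {M N : ℕ} (hsep : ∀ a ∈ zeckSet M, ∀ b ∈ zeckSet N, b + 2 ≤ a) :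
    zeckSet (M + N) = zeckSet M ∪ zeckSet N := by
  have hdisj : Disjoint (zeckSet M) (zeckSet N) :=
    Finset.disjoint_left.2 fun a ha hb => by have := hsep a ha a hb; omega
  refine zeckSet_eq (fun k hk hk1 => ?_) ?_
  · rcases Finset.mem_union.1 hk with h | h <;> rcases Finset.mem_union.1 hk1 with h' | h'
    · exact noConsec_zeckSet M k h h'
    · have := hsep k h (k + 1) h'; omega
    · have := hsep (k + 1) h' k h; omega
    · exact noConsec_zeckSet N k h h'
  · rw [fibSum, Finset.sum_union hdisj]
    exact congrArg₂ (· + ·) (fibSum_zeckSet M) (fibSum_zeckSet N)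

def altDigits (r : ℕ) : Finset ℕ := (Finset.range r).filter (fun k => k % 2 ≠ r % 2)

lemma mem_altDigits {k r : ℕ} : k ∈ altDigits r ↔ k < r ∧ k % 2 ≠ r % 2 := by
  simp [altDigits]

lemma noConsec_altDigits (r : ℕ) : NoConsec (altDigits r) := by
  intro k hk hk1
  rw [mem_altDigits] at hk hk1
  omega

lemma altDigits_add_two (r : ℕ) : altDigits (r + 2) = insert (r + 1) (altDigits r) := by
  ext k
  simp only [mem_altDigits, Finset.mem_insert]
  omega

lemma fibSum_altDigits (r : ℕ) : fibSum (altDigits r) = fibF r - 1 := by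
  induction r using Nat.strong_induction_on with
  | _ r ih =>
    match r with
    | 0 => rfl
    | 1 => rfl
    | r + 2 =>
      rw [altDigits_add_two, fibSum_insert (by rw [mem_altDigits]; omega), ih r (by omega)]
      have : fibF (r + 2) = fibF (r + 1) + fibF r := rfl
      have := fibF_pos r
      omega

lemma zeckSet_fibF_sub_one (r : ℕ) : zeckSet (fibF r - 1) = altDigits r :=
  zeckSet_eq (noConsec_altDigits r) (fibSum_altDigits r)

lemma zeckSet_add_fibF_sub_one {j r : ℕ} (hj : ∀ k ∈ zeckSet j, r + 1 ≤ k) :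
    zeckSet (j + (fibF r - 1)) = zeckSet j ∪ altDigits r := by
  rw [zeckSet_add, zeckSet_fibF_sub_one]
  intro a ha b hb
  rw [zeckSet_fibF_sub_one, mem_altDigits] at hb
  have := hj a ha
  omega

lemma add_one_le_of_altDigits_subset {j r : ℕ} (hr : 1 ≤ r)
    (hsub : altDigits r ⊆ zeckSet (j + (fibF r - 1))) : ∀ k ∈ zeckSet j, r + 1 ≤ k := by
  set i := j + (fibF r - 1)
  have hsum : fibSum (zeckSet i \ altDigits r) + (fibF r - 1) = i := by
    rw [← fibSum_altDigits, fibSum, fibSum, Finset.sum_sdiff hsub]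
    exact fibSum_zeckSet i
  have hj : zeckSet j = zeckSet i \ altDigits r :=
    zeckSet_eq ((noConsec_zeckSet i).mono Finset.sdiff_subset) (by omega)
  intro k hk
  rw [hj, Finset.mem_sdiff, mem_altDigits] at hk
  obtain ⟨hki, hkr⟩ := hk
  by_contra! hlt
  have hnext : k + 1 ∈ zeckSet i ∨ k - 1 + 1 ∈ zeckSet i ∧ k - 1 ∈ zeckSet i := by
    rcases Nat.lt_or_ge k r with h | h
    · exact .inl (hsub (mem_altDigits.2 (by omega)))
    · exact .inr ⟨by rwa [show k - 1 + 1 = k by omega], hsub (mem_altDigits.2 (by omega))⟩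
  rcases hnext with h | ⟨h, h'⟩
  · exact noConsec_zeckSet i k hki h
  · exact noConsec_zeckSet i _ h' h

lemma add_two_le_of_mem_erase {j z : ℕ} (hz : z ∈ zeckSet j)
    (hmin : ∀ k ∈ zeckSet j, z ≤ k) :
    ∀ k ∈ (zeckSet j).erase z, z + 2 ≤ k := by
  intro k hk
  have hkz := Finset.ne_of_mem_erase hk
  have hk := Finset.mem_of_mem_erase hk
  have : k ≠ z + 1 := by
    rintro rfl
    exact noConsec_zeckSet j z hz hk
  have := hmin k hk
  omega

lemma zeckSet_sub_one {j z : ℕ} (hz : z ∈ zeckSet j) (hmin : ∀ k ∈ zeckSet j, z ≤ k) :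
    zeckSet (j - 1) = (zeckSet j).erase z ∪ altDigits z := by
  set H := (zeckSet j).erase z
  have hH : zeckSet (fibSum H) = H :=
    zeckSet_eq ((noConsec_zeckSet j).mono (Finset.erase_subset _ _)) rfl
  have hj : j - 1 = fibSum H + (fibF z - 1) := by
    have hsplit : fibF z + fibSum H = fibSum (zeckSet j) := Finset.add_sum_erase _ fibF hz
    have := fibSum_zeckSet j
    have := fibF_pos z
    omega
  rw [hj, zeckSet_add_fibF_sub_one, hH]
  intro k hk
  rw [hH] at hk
  have := add_two_le_of_mem_erase hz hmin k hk
  omega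

lemma le_carryLen_iff_of_zero_notMem {N : ℕ} (h0 : 0 ∉ zeckSet N) (m : ℕ) :
    m ≤ carryLen N ↔ altDigits (2 * m) ⊆ zeckSet N := by
  rw [carryLen, if_pos (zeck_eq_zero_iff.2 h0), Nat.le_find_iff]
  simp only [not_not, zeck_eq_zero_iff, ← mem_zeckSet]
  constructor
  · intro h k hk
    rw [mem_altDigits] at hk
    obtain ⟨a, rfl⟩ : ∃ a, k = 2 * a + 1 := ⟨k / 2, by omega⟩
    exact (h a (by omega)).1
  · intro h a ha
    have hodd : 2 * a + 1 ∈ zeckSet N := h (mem_altDigits.2 (by omega))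
    exact ⟨hodd, fun heven => noConsec_zeckSet N _ heven hodd⟩

lemma le_carryLen_iff_of_zero_mem {N : ℕ} (h0 : 0 ∈ zeckSet N) (m : ℕ) :
    m ≤ carryLen N ↔ altDigits (2 * m + 1) ⊆ zeckSet N := by
  rw [carryLen, if_neg (by rwa [zeck_eq_zero_iff, not_not]), Nat.le_find_iff]
  simp only [not_not, zeck_eq_zero_iff, ← mem_zeckSet]
  constructor
  · intro h k hk
    rw [mem_altDigits] at hk
    rcases Nat.eq_zero_or_pos k with rfl | hk0
    · exact h0
    · obtain ⟨a, rfl⟩ : ∃ a, k = 2 * a + 2 := ⟨k / 2 - 1, by omega⟩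
      exact (h a (by omega)).1
  · intro h a ha
    have heven : 2 * a + 2 ∈ zeckSet N := h (mem_altDigits.2 (by omega))
    exact ⟨heven, fun hodd => noConsec_zeckSet N _ hodd heven⟩

lemma carryLen_eq_half {i z : ℕ} (hsub : altDigits z ⊆ zeckSet i) (hnext : z + 1 ∉ zeckSet i)
    (h0 : 0 ∈ zeckSet i ↔ z % 2 = 1) : carryLen i = z / 2 := by
  obtain ⟨s, rfl | rfl⟩ := Nat.even_or_odd' z
  · have h0 : 0 ∉ zeckSet i := by rw [h0]; omega
    rw [show 2 * s / 2 = s by omega]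
    refine le_antisymm (not_lt.1 fun hlt => hnext ?_)
      ((le_carryLen_iff_of_zero_notMem h0 s).2 hsub)
    exact (le_carryLen_iff_of_zero_notMem h0 (s + 1)).1 hlt (mem_altDigits.2 (by omega))
  · have h0 : 0 ∈ zeckSet i := by rw [h0]; omega
    rw [show (2 * s + 1) / 2 = s by omega]
    refine le_antisymm (not_lt.1 fun hlt => hnext ?_)
      ((le_carryLen_iff_of_zero_mem h0 s).2 hsub)
    exact (le_carryLen_iff_of_zero_mem h0 (s + 1)).1 hlt (mem_altDigits.2 (by omega))

def carryWeight (p : ℕ → ℝ) (r : ℕ) : ℝ :=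
  Pprod p ((r + 1) / 2) * (1 - p ((r + 1) / 2 + 1))

/-- Both parity cases of `Smat` describe the carry targets `i + 1 - fibF r` of row `i` by one
condition: the lowest digits of `i` form the block `altDigits r`. -/
def carrySet (i : ℕ) : Finset ℕ := (Finset.Icc 1 i).filter (fun r => altDigits r ⊆ zeckSet i)

lemma fibF_le_succ_of_altDigits_subset {i r : ℕ} (h : altDigits r ⊆ zeckSet i) :
    fibF r ≤ i + 1 := by
  have := Finset.sum_le_sum_of_subset (f := fibF) h
  rw [← fibSum, ← fibSum, fibSum_altDigits, fibSum_zeckSet] at this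
  omega

lemma mem_carrySet {i r : ℕ} : r ∈ carrySet i ↔ 1 ≤ r ∧ altDigits r ⊆ zeckSet i := by
  rw [carrySet, Finset.mem_filter, Finset.mem_Icc]
  constructor
  · exact fun ⟨⟨hr, _⟩, h⟩ => ⟨hr, h⟩
  · intro ⟨hr, h⟩
    have := fibF_le_succ_of_altDigits_subset h
    have := lt_fibF r
    exact ⟨⟨hr, by omega⟩, h⟩

lemma carrySet_of_zero_notMem {i : ℕ} (h0 : 0 ∉ zeckSet i) :
    carrySet i = (Finset.Icc 1 (carryLen i)).image (2 * ·) := by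
  ext r
  simp only [mem_carrySet, Finset.mem_image, Finset.mem_Icc]
  constructor
  · rintro ⟨hr, hsub⟩
    obtain ⟨m, rfl⟩ : ∃ m, r = 2 * m := by
      refine ⟨r / 2, ?_⟩
      by_contra hodd
      exact h0 (hsub (mem_altDigits.2 (by omega)))
    exact ⟨m, ⟨by omega, (le_carryLen_iff_of_zero_notMem h0 m).2 hsub⟩, rfl⟩
  · rintro ⟨m, ⟨hm, hmc⟩, rfl⟩
    exact ⟨by omega, (le_carryLen_iff_of_zero_notMem h0 m).1 hmc⟩

lemma carrySet_of_zero_mem {i : ℕ} (h0 : 0 ∈ zeckSet i) :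
    carrySet i = (Finset.Icc 1 (carryLen i + 1)).image (fun m => 2 * m - 1) := by
  ext r
  simp only [mem_carrySet, Finset.mem_image, Finset.mem_Icc]
  constructor
  · rintro ⟨hr, hsub⟩
    obtain ⟨m, rfl⟩ : ∃ m, r = 2 * m + 1 := by
      refine ⟨r / 2, ?_⟩
      by_contra heven
      exact noConsec_zeckSet i 0 h0 (hsub (mem_altDigits.2 (by omega)))
    refine ⟨m + 1, ⟨by omega, ?_⟩, by omega⟩
    simpa using (le_carryLen_iff_of_zero_mem h0 m).2 hsub
  · rintro ⟨m, ⟨hm, hmc⟩, rfl⟩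
    have := (le_carryLen_iff_of_zero_mem h0 (m - 1)).1 (by omega)
    exact ⟨by omega, by rwa [show 2 * (m - 1) + 1 = 2 * m - 1 by omega] at this⟩

lemma Smat_of_ne_succ (p : ℕ → ℝ) {i j : ℕ} (hj : j ≠ i + 1) :
    Smat p i j = (if j = i then 1 - p 1 else 0) +
      ∑ r ∈ carrySet i, if i = j + (fibF r - 1) then carryWeight p r else 0 := by
  have hcond : ∀ r ∈ carrySet i, ∀ w : ℝ,
      (if j = i + 1 - fibF r then w else 0) = if i = j + (fibF r - 1) then w else 0 := by
    intro r hr w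
    have := fibF_le_succ_of_altDigits_subset (mem_carrySet.1 hr).2
    have := fibF_pos r
    exact if_congr (by omega) rfl rfl
  rw [Smat]
  congr 1
  by_cases h0 : 0 ∈ zeckSet i
  · rw [if_neg (by rwa [zeck_eq_zero_iff, not_not]), if_neg hj, zero_add, carrySet_of_zero_mem h0,
      Finset.sum_image fun a ha b hb hab => by
        simp only [Finset.coe_Icc, Set.mem_Icc] at ha hb hab; omega]
    refine Finset.sum_congr rfl fun m hm => ?_
    have hm1 := (Finset.mem_Icc.1 hm).1
    rw [hcond _ (carrySet_of_zero_mem h0 ▸ Finset.mem_image_of_mem _ hm), carryWeight,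
      show (2 * m - 1 + 1) / 2 = m by omega]
  · rw [if_pos (zeck_eq_zero_iff.2 h0), if_neg hj, zero_add, carrySet_of_zero_notMem h0,
      Finset.sum_image fun a _ b _ hab => by omega]
    refine Finset.sum_congr rfl fun m hm => ?_
    rw [hcond _ (carrySet_of_zero_notMem h0 ▸ Finset.mem_image_of_mem _ hm), carryWeight,
      show (2 * m + 1) / 2 = m by omega]

lemma Smat_self_succ (p : ℕ → ℝ) (i : ℕ) : Smat p i (i + 1) =
    if 0 ∈ zeckSet i then Pprod p (carryLen i + 2) else Pprod p (carryLen i + 1) := by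
  have hcarry : ∀ (s : Finset ℕ) (f : ℕ → ℕ) (w : ℕ → ℝ),
      ∑ m ∈ s, (if i + 1 = i + 1 - fibF (f m) then w m else 0) = 0 :=
    fun s f w => Finset.sum_eq_zero fun m _ => if_neg (by have := fibF_pos (f m); omega)
  rw [Smat, if_neg (by omega), zero_add]
  by_cases h0 : 0 ∈ zeckSet i
  · rw [if_neg (by rwa [zeck_eq_zero_iff, not_not]), if_pos h0, if_pos rfl, hcarry, add_zero]
  · rw [if_pos (zeck_eq_zero_iff.2 h0), if_neg h0, if_pos rfl, hcarry, add_zero]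

lemma Smat_self (p : ℕ → ℝ) (i : ℕ) : Smat p i i = 1 - p 1 := by
  rw [Smat_of_ne_succ p (by omega), if_pos rfl, Finset.sum_eq_zero, add_zero]
  intro r hr
  have := two_le_fibF (mem_carrySet.1 hr).1
  exact if_neg (by omega)

lemma Smat_sub_one_self (p : ℕ → ℝ) {j z : ℕ} (hz : z ∈ zeckSet j)
    (hmin : ∀ k ∈ zeckSet j, z ≤ k) : Smat p (j - 1) j = Pprod p ((z + 1) / 2 + 1) := by
  have hj := Nat.pos_of_ne_zero (ne_zero_of_mem_zeckSet hz)
  have hpred := zeckSet_sub_one hz hmin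
  have hlow : ∀ k < z + 2, k ∈ zeckSet (j - 1) ↔ k ∈ altDigits z := by
    intro k hk
    rw [hpred, Finset.mem_union, or_iff_right fun h => ?_]
    have := add_two_le_of_mem_erase hz hmin k h
    omega
  have h0 : 0 ∈ zeckSet (j - 1) ↔ z % 2 = 1 := by
    rw [hlow 0 (by omega), mem_altDigits]
    omega
  have hnext : z + 1 ∉ zeckSet (j - 1) := by
    rw [hlow _ (by omega), mem_altDigits]
    omega
  rw [show Smat p (j - 1) j = Smat p (j - 1) (j - 1 + 1) by rw [Nat.sub_add_cancel hj],
    Smat_self_succ, carryLen_eq_half (hpred ▸ Finset.subset_union_right) hnext h0]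
  by_cases hz2 : z % 2 = 1
  · rw [if_pos (h0.2 hz2)]
    congr 1
    omega
  · rw [if_neg (mt h0.1 hz2)]
    congr 1
    omega

lemma Smat_add_fibF_sub_one (p : ℕ → ℝ) {j r : ℕ} (hr : 1 ≤ r)
    (hj : ∀ k ∈ zeckSet j, r + 1 ≤ k) : Smat p (j + (fibF r - 1)) j = carryWeight p r := by
  have hFr := two_le_fibF hr
  have hmem : r ∈ carrySet (j + (fibF r - 1)) :=
    mem_carrySet.2 ⟨hr, zeckSet_add_fibF_sub_one hj ▸ Finset.subset_union_right⟩
  rw [Smat_of_ne_succ p (by omega), if_neg (by omega), zero_add,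
    Finset.sum_eq_single_of_mem r hmem (fun r' _ hr' => if_neg fun h => hr' ?_), if_pos rfl]
  have := fibF_pos r'
  exact fibF_strictMono.injective (by omega)

lemma eq_or_of_Smat_ne_zero (p : ℕ → ℝ) {i j : ℕ} (h : Smat p i j ≠ 0) :
    i = j ∨ i + 1 = j ∨
      ∃ r, 1 ≤ r ∧ (∀ k ∈ zeckSet j, r + 1 ≤ k) ∧ i = j + (fibF r - 1) := by
  by_cases hup : j = i + 1
  · exact .inr (.inl hup.symm)
  by_cases hdiag : j = i
  · exact .inl hdiag.symm
  rw [Smat_of_ne_succ p hup, if_neg hdiag, zero_add] at h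
  obtain ⟨r, hr, hne⟩ := Finset.exists_ne_zero_of_sum_ne_zero h
  have hi : i = j + (fibF r - 1) := by
    by_contra hi
    exact hne (if_neg hi)
  obtain ⟨hr1, hsub⟩ := mem_carrySet.1 hr
  exact .inr (.inr ⟨r, hr1, add_one_le_of_altDigits_subset hr1 (hi ▸ hsub), hi⟩)

lemma tsum_mul_Smat (p : ℕ → ℝ) (x : ℕ → ℂ) {j z : ℕ} (hz : z ∈ zeckSet j)
    (hmin : ∀ k ∈ zeckSet j, z ≤ k) :
    ∑' i, x i * (Smat p i j : ℂ) =
      x (j - 1) * (Pprod p ((z + 1) / 2 + 1) : ℂ) + x j * ((1 - p 1 : ℝ) : ℂ) +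
        ∑ r ∈ Finset.Icc 1 (z - 1), x (j + (fibF r - 1)) * (carryWeight p r : ℂ) := by
  have hj := Nat.pos_of_ne_zero (ne_zero_of_mem_zeckSet hz)
  set src := (Finset.Icc 1 (z - 1)).image (fun r => j + (fibF r - 1))
  have hsrc : ∀ i ∈ src, j + 1 ≤ i := by
    simp only [src, Finset.mem_image, Finset.mem_Icc]
    rintro i ⟨r, ⟨hr, -⟩, rfl⟩
    have := two_le_fibF hr
    omega
  have hsupp : ∀ i ∉ insert (j - 1) (insert j src), x i * (Smat p i j : ℂ) = 0 := by
    intro i hi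
    simp only [Finset.mem_insert, not_or] at hi
    obtain ⟨hi1, hi2, hi3⟩ := hi
    rcases eq_or_ne (Smat p i j) 0 with h | h
    · rw [h, Complex.ofReal_zero, mul_zero]
    rcases eq_or_of_Smat_ne_zero p h with rfl | h | ⟨r, hr, hrj, rfl⟩
    · exact (hi2 rfl).elim
    · exact (hi1 (by omega)).elim
    · have := hrj z hz
      exact (hi3 (Finset.mem_image_of_mem _ (Finset.mem_Icc.2 ⟨hr, by omega⟩))).elim
  rw [tsum_eq_sum hsupp, Finset.sum_insert, Finset.sum_insert, Finset.sum_image,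
    Smat_sub_one_self p hz hmin, Smat_self, add_assoc]
  · refine congrArg _ (congrArg _ (Finset.sum_congr rfl fun r hr => ?_))
    obtain ⟨hr1, hrz⟩ := Finset.mem_Icc.1 hr
    rw [Smat_add_fibF_sub_one p hr1 fun k hk => by have := hmin k hk; omega]
  · intro a ha b hb hab
    have := two_le_fibF (Finset.mem_Icc.1 ha).1
    have := two_le_fibF (Finset.mem_Icc.1 hb).1
    exact fibF_strictMono.injective (by simp only at hab; omega)
  · exact fun h => by have := hsrc j h; omega
  · simp only [Finset.mem_insert, not_or]
    exact ⟨by omega, fun h => by have := hsrc _ h; omega⟩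

section Weights

variable (p : ℕ → ℝ)

lemma Pprod_succ (t : ℕ) : Pprod p (t + 1) = Pprod p t * p (t + 1) :=
  Finset.prod_Icc_succ_top (by omega) p

def digitWeight (k : ℕ) : ℝ := if k = 0 then 1 else p ((k + 1) / 2 + 1)

def zeckWeight (N : ℕ) : ℝ := ∏ k ∈ zeckSet N, digitWeight p k

def pairProd (r : ℕ) : ℝ := Pprod p ((r + 1) / 2 + 1) * Pprod p (r / 2 + 1)

lemma zeckWeight_zero : zeckWeight p 0 = 1 := by
  rw [zeckWeight, zeckSet_zero, Finset.prod_empty]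

lemma zeckWeight_fibF (k : ℕ) : zeckWeight p (fibF k) = digitWeight p k := by
  rw [zeckWeight, zeckSet_fibF, Finset.prod_singleton]

lemma zeckWeight_add_fibF_sub_one {j r : ℕ} (hj : ∀ k ∈ zeckSet j, r + 1 ≤ k) :
    zeckWeight p (j + (fibF r - 1)) = zeckWeight p j * zeckWeight p (fibF r - 1) := by
  rw [zeckWeight, zeckSet_add_fibF_sub_one hj, Finset.prod_union, zeckWeight, zeckWeight,
    zeckSet_fibF_sub_one]
  exact Finset.disjoint_left.2 fun k hk hk' => by
    have := hj k hk
    have := (mem_altDigits.1 hk').1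
    omega

lemma p_one_mul_zeckWeight_fibF_sub_one (r : ℕ) :
    p 1 * zeckWeight p (fibF r - 1) = Pprod p (r / 2 + 1) := by
  rw [zeckWeight, zeckSet_fibF_sub_one]
  induction r using Nat.strong_induction_on with
  | _ r ih =>
    match r with
    | 0 => simp [altDigits, Pprod]
    | 1 => simp [show altDigits 1 = {0} by decide, Pprod, digitWeight]
    | r + 2 =>
      rw [altDigits_add_two, Finset.prod_insert (by rw [mem_altDigits]; omega), mul_left_comm,
        ih r (by omega), show (r + 2) / 2 + 1 = r / 2 + 1 + 1 by omega, Pprod_succ p (r / 2 + 1),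
        digitWeight, if_neg (by omega), show (r + 1 + 1) / 2 + 1 = r / 2 + 1 + 1 by omega, mul_comm]

lemma pairProd_zero : pairProd p 0 = p 1 * p 1 := by
  simp [pairProd, Pprod]

lemma pairProd_succ (r : ℕ) : pairProd p (r + 1) = pairProd p r * digitWeight p (r + 1) := by
  rw [pairProd, pairProd, digitWeight, if_neg (by omega), show (r + 1 + 1) / 2 = r / 2 + 1 by omega,
    Pprod_succ p (r / 2 + 1)]
  ring

lemma p_one_mul_sum_carryWeight (R : ℕ) :
    p 1 * ∑ r ∈ Finset.Icc 1 R, zeckWeight p (fibF r - 1) * carryWeight p r =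
      p 1 * p 1 - pairProd p R := by
  induction R with
  | zero => simp [pairProd_zero]
  | succ R ih =>
    rw [Finset.sum_Icc_succ_top (by omega), mul_add, ih, ← mul_assoc,
      p_one_mul_zeckWeight_fibF_sub_one, pairProd_succ, digitWeight, if_neg (by omega), pairProd,
      carryWeight, show (R + 1 + 1) / 2 = R / 2 + 1 by omega]
    ring

lemma digitWeight_mul_sub_sum_carryWeight (hp1 : p 1 ≠ 0) (z : ℕ) :
    digitWeight p z *
        (p 1 - ∑ r ∈ Finset.Icc 1 (z - 1), zeckWeight p (fibF r - 1) * carryWeight p r) =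
      zeckWeight p (fibF z - 1) * Pprod p ((z + 1) / 2 + 1) := by
  apply mul_left_cancel₀ hp1
  rcases Nat.eq_zero_or_pos z with rfl | hz
  · simp [digitWeight, zeckWeight, zeckSet_zero, fibF, Pprod]
  · obtain ⟨z, rfl⟩ : ∃ z', z = z' + 1 := ⟨z - 1, by omega⟩
    rw [mul_left_comm, mul_sub, p_one_mul_sum_carryWeight, ← mul_assoc,
      p_one_mul_zeckWeight_fibF_sub_one, Nat.add_sub_cancel]
    have := pairProd_succ p z
    rw [pairProd] at this
    linear_combination -this

lemma zeckWeight_column (hp1 : p 1 ≠ 0) {j z : ℕ} (hz : z ∈ zeckSet j)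
    (hmin : ∀ k ∈ zeckSet j, z ≤ k) :
    zeckWeight p j =
      zeckWeight p (j - 1) * Pprod p ((z + 1) / 2 + 1) + zeckWeight p j * (1 - p 1) +
      ∑ r ∈ Finset.Icc 1 (z - 1), zeckWeight p (j + (fibF r - 1)) * carryWeight p r := by
  set R := ∏ k ∈ (zeckSet j).erase z, digitWeight p k
  have hj : zeckWeight p j = digitWeight p z * R := (Finset.mul_prod_erase _ _ hz).symm
  have hj1 : zeckWeight p (j - 1) = R * zeckWeight p (fibF z - 1) := by
    rw [zeckWeight, zeckSet_sub_one hz hmin, Finset.prod_union, zeckWeight, zeckSet_fibF_sub_one]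
    exact Finset.disjoint_left.2 fun k hk hk' => by
      have := add_two_le_of_mem_erase hz hmin k hk
      have := (mem_altDigits.1 hk').1
      omega
  have hsum : ∑ r ∈ Finset.Icc 1 (z - 1), zeckWeight p (j + (fibF r - 1)) * carryWeight p r =
      zeckWeight p j *
        ∑ r ∈ Finset.Icc 1 (z - 1), zeckWeight p (fibF r - 1) * carryWeight p r := by
    rw [Finset.mul_sum]
    refine Finset.sum_congr rfl fun r hr => ?_
    have hr := Finset.mem_Icc.1 hr
    have hrj : ∀ k ∈ zeckSet j, r + 1 ≤ k := fun k hk => by have := hmin k hk; omega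
    rw [zeckWeight_add_fibF_sub_one p hrj, mul_assoc]
  rw [hsum, hj1, hj]
  linear_combination R * digitWeight_mul_sub_sum_carryWeight p hp1 z

variable {p}

lemma Pprod_pos (hp : ∀ i, 1 ≤ i → 0 < p i ∧ p i ≤ 1) (t : ℕ) : 0 < Pprod p t :=
  Finset.prod_pos fun i hi => (hp i (Finset.mem_Icc.1 hi).1).1

lemma zeckWeight_pos (hp : ∀ i, 1 ≤ i → 0 < p i ∧ p i ≤ 1) (N : ℕ) :
    0 < zeckWeight p N := by
  refine Finset.prod_pos fun k _ => ?_
  rw [digitWeight]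
  split
  · exact one_pos
  · exact (hp _ (by omega)).1

end Weights

lemma apply_add_eq_of_lt_fibF {α : Type*} {ν : ℕ → α} {N r : ℕ}
    (hstep : ∀ z < r, ∀ M, z ∈ zeckSet M → (∀ k ∈ zeckSet M, z ≤ k) →
      ν M = ν (M - 1))
    (hN : ∀ k ∈ zeckSet N, r + 1 ≤ k) : ∀ y < fibF r, ν (N + y) = ν N := by
  intro y
  induction y with
  | zero => exact fun _ => rfl
  | succ y ih =>
    intro hy
    have hlow : ∀ b ∈ zeckSet (y + 1), b < r := fun b hb => lt_of_mem_zeckSet hb hy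
    have hne := zeckSet_nonempty (Nat.succ_ne_zero y)
    set z := (zeckSet (y + 1)).min' hne
    have hunion : zeckSet (N + (y + 1)) = zeckSet N ∪ zeckSet (y + 1) :=
      zeckSet_add fun a ha b hb => by
        have := hN a ha
        have := hlow b hb
        omega
    have hzr : z < r := hlow z ((zeckSet (y + 1)).min'_mem hne)
    have hmin : ∀ k ∈ zeckSet (N + (y + 1)), z ≤ k := by
      intro k hk
      rcases Finset.mem_union.1 (hunion ▸ hk) with hk | hk
      · have := hN k hk
        omega
      · exact (zeckSet (y + 1)).min'_le k hk
    rw [hstep z hzr _ (hunion ▸ Finset.mem_union_right _ ((zeckSet (y + 1)).min'_mem hne)) hmin,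
      show N + (y + 1) - 1 = N + y by omega, ih (by omega)]

section Invariant

variable {p : ℕ → ℝ} (hp : ∀ i, 1 ≤ i → 0 < p i ∧ p i ≤ 1) {μ : ℕ → ℂ}
  (hinv : ∀ j : ℕ, μ j = ∑' i : ℕ, μ i * (Smat p i j : ℂ))
include hp hinv

/-- By induction on the lowest digit `z` of `N`, `ν` already takes the value `ν N` at the other
sources `N + (fibF r - 1)`, `r < z`, of column `N`; subtracting `ν N` times `zeckWeight_column`
from the column equation then leaves `ν (N - 1) = ν N`. -/
lemma eq_sub_one_of_eq_zeckWeight_mul {ν : ℕ → ℂ}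
    (hν : ∀ i, μ i = zeckWeight p i * ν i) :
    ∀ z N, z ∈ zeckSet N → (∀ k ∈ zeckSet N, z ≤ k) → ν N = ν (N - 1) := by
  intro z
  induction z using Nat.strong_induction_on with
  | _ z ih =>
    intro N hz hmin
    have hsrc : ∀ r ∈ Finset.Icc 1 (z - 1), ν (N + (fibF r - 1)) = ν N := by
      intro r hr
      have hr := Finset.mem_Icc.1 hr
      refine apply_add_eq_of_lt_fibF (fun z' hz' => ih z' (by omega)) (fun k hk => ?_) _
        (Nat.sub_lt (fibF_pos r) one_pos)
      have := hmin k hk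
      omega
    have hcol := hinv N
    rw [tsum_mul_Smat p μ hz hmin] at hcol
    have hsum : ∑ r ∈ Finset.Icc 1 (z - 1), μ (N + (fibF r - 1)) * (carryWeight p r : ℂ) =
        ν N * ∑ r ∈ Finset.Icc 1 (z - 1),
          (zeckWeight p (N + (fibF r - 1)) : ℂ) * carryWeight p r := by
      rw [Finset.mul_sum]
      refine Finset.sum_congr rfl fun r hr => ?_
      rw [hν, hsrc r hr]
      ring
    rw [hsum, hν N, hν (N - 1)] at hcol
    have hW := congrArg Complex.ofReal (zeckWeight_column p (hp 1 le_rfl).1.ne' hz hmin)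
    push_cast at hcol hW
    have hpos : ((zeckWeight p (N - 1) * Pprod p ((z + 1) / 2 + 1) : ℝ) : ℂ) ≠ 0 :=
      Complex.ofReal_ne_zero.2 (mul_pos (zeckWeight_pos hp _) (Pprod_pos hp _)).ne'
    push_cast at hpos
    refine (mul_right_inj' hpos).1 ?_
    linear_combination hcol - ν N * hW

lemma eq_zeckWeight_mul (N : ℕ) : μ N = zeckWeight p N * μ 0 := by
  have hW : ∀ i, (zeckWeight p i : ℂ) ≠ 0 :=
    fun i => Complex.ofReal_ne_zero.2 (zeckWeight_pos hp i).ne'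
  set ν : ℕ → ℂ := fun i => μ i / zeckWeight p i
  have hν : ∀ i, μ i = zeckWeight p i * ν i := fun i => (mul_div_cancel₀ _ (hW i)).symm
  suffices ν N = ν 0 by rw [hν N, this, hν 0, zeckWeight_zero, Complex.ofReal_one, one_mul]
  induction N using Nat.strong_induction_on with
  | _ N ih =>
    rcases eq_or_ne N 0 with rfl | hN
    · rfl
    · have hne := zeckSet_nonempty hN
      rw [eq_sub_one_of_eq_zeckWeight_mul hp hinv hν _ N ((zeckSet N).min'_mem hne)
        fun k hk => (zeckSet N).min'_le k hk, ih (N - 1) (by omega)]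

end Invariant

/-- If `∑_{i ≥ 1} p i = +∞` (the `p i` are not summable), then every
summable complex sequence `μ ∈ ℓ¹(ℕ)` with `μ S = μ` is identically zero; in particular
the chain admits no invariant probability measure. -/
theorem stmt6 (p : ℕ → ℝ) (hp : ∀ i, 1 ≤ i → 0 < p i ∧ p i ≤ 1)
    (hdiv : ¬ Summable (fun i : ℕ => p (i+1)))
    (μ : ℕ → ℂ) (hμ : Summable μ)
    (hinv : ∀ j : ℕ, μ j = ∑' i : ℕ, μ i * (Smat p i j : ℂ)) :
    ∀ i, μ i = 0 := by
  have hμ0 : μ 0 = 0 := by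
    by_contra h0
    apply hdiv
    have hodd : Summable fun s => μ (fibF (2 * s + 1)) :=
      hμ.comp_injective (fibF_strictMono.injective.comp fun a b h => by omega)
    have hps : Summable fun s => (p (s + 2) : ℂ) := by
      refine (hodd.mul_right (μ 0)⁻¹).congr fun s => ?_
      rw [eq_zeckWeight_mul hp hinv, zeckWeight_fibF, digitWeight, if_neg (by omega),
        show (2 * s + 1 + 1) / 2 + 1 = s + 2 by omega, mul_inv_cancel_right₀ h0]
    exact (summable_nat_add_iff 1).1 (Complex.summable_ofReal.1 hps)
  intro i
  rw [eq_zeckWeight_mul hp hinv i, hμ0, mul_zero]
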